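/- Let f be a slice function of class C¹ on an axially symmetric open subset Ω of a hypercomplex subspace M of dimension m+1 > 2 (in the associative case). Then on Ω minus the reals, the spherical Dirac operator satisfies Γ_B f = (m-1)·Im(x)·f'_s(x), where f'_s is the spherical derivative of f. -/

import Mathlib

/-!
The operators `L_{ij}` with `i, j ≥ 1` differentiate along the rotation `xᵢ eⱼ - xⱼ eᵢ`, which
fixes `x₀` and is tangent to the sphere `‖Im x‖ = β`; hence they kill every function of
`ζ(x) = x₀ + iβ`. Writing `f = F₁ ∘ ζ + Im(x) · (β⁻¹F₂) ∘ ζ`, only the linear factor `Im(x)` is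
differentiated, so `L_{ij} f = (xᵢ vⱼ - xⱼ vᵢ) f'ₛ`. The rest is Clifford algebra:
`∑ⱼ vⱼ² = -m` and `∑ᵢ vᵢ vⱼ vᵢ = (m - 2) vⱼ` turn `Γ_B f` into `(m - 1) Im(x) f'ₛ`.
-/

noncomputable section
namespace PaperStmt

variable {A : Type*} [NormedRing A] [NormedAlgebra ℝ A] {m : ℕ}

/-- Partial derivative in the `i`-th coordinate direction. -/
def pd (i : Fin (m + 1)) (f : (Fin (m + 1) → ℝ) → A) : (Fin (m + 1) → ℝ) → A :=
  fun x => fderiv ℝ f x (Pi.single i 1)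

/-- The Cauchy–Riemann operator `∂̄_B = (1/2)(∂₀ + ∑ᵢ vᵢ ∂ᵢ)` induced by the
basis `B = (1, v₁, …, v_m)` (so `v 0 = 1`). -/
def dbar (v : Fin (m + 1) → A) (f : (Fin (m + 1) → ℝ) → A) : (Fin (m + 1) → ℝ) → A :=
  fun x => (2 : ℝ)⁻¹ •
    (pd 0 f x + ∑ i ∈ Finset.univ.erase (0 : Fin (m + 1)), v i * pd i f x)

/-- The conjugated Cauchy–Riemann operator `∂_B = (1/2)(∂₀ - ∑ᵢ vᵢ ∂ᵢ)`. -/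
def dconj (v : Fin (m + 1) → A) (f : (Fin (m + 1) → ℝ) → A) : (Fin (m + 1) → ℝ) → A :=
  fun x => (2 : ℝ)⁻¹ •
    (pd 0 f x - ∑ i ∈ Finset.univ.erase (0 : Fin (m + 1)), v i * pd i f x)

/-- The Laplacian `Δ_B = ∑ᵢ ∂ᵢ²` of `M ≅ ℝ^{m+1}`. -/
def lap (f : (Fin (m + 1) → ℝ) → A) : (Fin (m + 1) → ℝ) → A :=
  fun x => ∑ i : Fin (m + 1), pd i (pd i f) x

/-- The norm `β = ‖Im x‖` of the imaginary part of the point with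
coordinates `x`. -/
def nIm (x : Fin (m + 1) → ℝ) : ℝ :=
  Real.sqrt (∑ i ∈ Finset.univ.erase (0 : Fin (m + 1)), (x i) ^ 2)

/-- The point `α + iβ` of the complex half-plane corresponding to `x`. -/
def zeta (x : Fin (m + 1) → ℝ) : ℂ := ⟨x 0, nIm x⟩

/-- The imaginary part `Im(x) = ∑_{i=1}^m xᵢ vᵢ` of the point of `M` with
coordinates `x`. -/
def imv (v : Fin (m + 1) → A) (x : Fin (m + 1) → ℝ) : A :=
  ∑ i ∈ Finset.univ.erase (0 : Fin (m + 1)), x i • v i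

/-- The point of `M` with coordinates `x` w.r.t. the basis `(1, v₁, …, v_m)`. -/
def iot (v : Fin (m + 1) → A) (x : Fin (m + 1) → ℝ) : A :=
  ∑ i : Fin (m + 1), x i • v i

/-- The slice function `I(F₁ + √-1 F₂)` induced on (the coordinates of) `M` by
the stem function with components `F₁, F₂`:
`f(α + Jβ) = F₁(α+iβ) + J F₂(α+iβ)` with `β = ‖Im x‖ ≥ 0`, `J = Im(x)/β`. -/
def sfun (v : Fin (m + 1) → A) (F₁ F₂ : ℂ → A) : (Fin (m + 1) → ℝ) → A :=
  fun x => F₁ (zeta x) + imv v x * ((nIm x)⁻¹ • F₂ (zeta x))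

/-- The spherical derivative `f'ₛ(x) = β⁻¹ F₂(α+iβ)` of the slice function
induced by the stem components `(F₁, F₂)`. -/
def sder (F₂ : ℂ → A) : (Fin (m + 1) → ℝ) → A :=
  fun x => (nIm x)⁻¹ • F₂ (zeta x)

/-- Real partial derivative of a stem component along `1 ∈ ℂ`. -/
def d1 (F : ℂ → A) (z : ℂ) : A := fderiv ℝ F z 1

/-- Real partial derivative of a stem component along `i ∈ ℂ`. -/
def dI (F : ℂ → A) (z : ℂ) : A := fderiv ℝ F z Complex.I

/-- The tangential operator `L_{ij} = xᵢ ∂ⱼ - xⱼ ∂ᵢ`. -/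
def Lop (i j : Fin (m + 1)) (f : (Fin (m + 1) → ℝ) → A) : (Fin (m + 1) → ℝ) → A :=
  fun x => x i • pd j f x - x j • pd i f x

/-- The spherical Dirac operator `Γ_B = -(1/2) ∑_{i,j=1}^m vᵢ (vⱼ L_{ij})`. -/
def Gam (v : Fin (m + 1) → A) (f : (Fin (m + 1) → ℝ) → A) : (Fin (m + 1) → ℝ) → A :=
  fun x => -((2 : ℝ)⁻¹ •
    ∑ i ∈ Finset.univ.erase (0 : Fin (m + 1)),
      ∑ j ∈ Finset.univ.erase (0 : Fin (m + 1)), v i * (v j * Lop i j f x))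

open Finset

section Clifford

variable {ι R : Type*} [DecidableEq ι] [Ring R] [Algebra ℝ R] {s : Finset ι} {e : ι → R}

theorem sum_mul_mul_self_of_anticomm (hsq : ∀ i ∈ s, e i * e i = -1)
    (hanti : ∀ i ∈ s, ∀ j ∈ s, i ≠ j → e i * e j = -(e j * e i)) {j : ι} (hj : j ∈ s) :
    ∑ i ∈ s, e i * e j * e i = ((#s : ℝ) - 2) • e j := by
  have hterm : ∀ i ∈ s, e i * e j * e i = e j + if i = j then (-2 : ℝ) • e j else 0 := by
    intro i hi
    by_cases hij : i = j
    · subst hij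
      rw [hsq i hi, neg_one_mul, if_pos rfl]
      module
    · rw [hanti i hi j hj hij, neg_mul, mul_assoc, hsq i hi, if_neg hij]
      simp
  rw [sum_congr rfl hterm, sum_add_distrib, sum_const, sum_ite_eq' s j, if_pos hj]
  module

theorem sum_sum_mul_mul_smul_sub_smul_of_anticomm (hsq : ∀ i ∈ s, e i * e i = -1)
    (hanti : ∀ i ∈ s, ∀ j ∈ s, i ≠ j → e i * e j = -(e j * e i)) (x : ι → ℝ) (c : R) :
    ∑ i ∈ s, ∑ j ∈ s, e i * (e j * ((x i • e j - x j • e i) * c)) =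
      -(2 * (#s : ℝ) - 2) • ((∑ k ∈ s, x k • e k) * c) := by
  have hterm : ∀ i j, e i * (e j * ((x i • e j - x j • e i) * c)) =
      x i • (e i * (e j * e j) * c) - x j • (e i * e j * e i * c) := by
    intro i j
    simp only [sub_mul, mul_sub, smul_mul_assoc, mul_smul_comm, mul_assoc]
  have hfirst : ∑ i ∈ s, ∑ j ∈ s, x i • (e i * (e j * e j) * c) =
      -(#s : ℝ) • ∑ k ∈ s, x k • (e k * c) := by
    rw [smul_sum]
    refine sum_congr rfl fun i _ => ?_
    rw [sum_congr rfl fun j hj => by rw [hsq j hj, mul_neg_one, neg_mul], sum_const]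
    module
  have hsecond : ∑ i ∈ s, ∑ j ∈ s, x j • (e i * e j * e i * c) =
      ((#s : ℝ) - 2) • ∑ k ∈ s, x k • (e k * c) := by
    rw [sum_comm, smul_sum]
    refine sum_congr rfl fun j hj => ?_
    rw [← smul_sum, ← sum_mul, sum_mul_mul_self_of_anticomm hsq hanti hj, smul_mul_assoc,
      smul_comm]
  simp only [hterm, sum_sub_distrib, hfirst, hsecond, sum_mul, smul_mul_assoc]
  module

end Clifford

section Rotation

variable {ι : Type*} [DecidableEq ι]

def rotVec (x : ι → ℝ) (i j : ι) : ι → ℝ := x i • Pi.single j 1 - x j • Pi.single i 1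

theorem sum_smul_rotVec {M : Type*} [AddCommGroup M] [Module ℝ M] {s : Finset ι} {i j : ι}
    (hi : i ∈ s) (hj : j ∈ s) (x : ι → ℝ) (e : ι → M) :
    ∑ k ∈ s, rotVec x i j k • e k = x i • e j - x j • e i := by
  simp only [rotVec, Pi.sub_apply, Pi.smul_apply, sub_smul, sum_sub_distrib, smul_eq_mul,
    mul_smul, ← smul_sum, Pi.single_apply, ite_smul, one_smul, zero_smul, sum_ite_eq' s, hi, hj,
    if_true]

theorem rotVec_apply_of_ne {x : ι → ℝ} {i j k : ι} (hi : k ≠ i) (hj : k ≠ j) :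
    rotVec x i j k = 0 := by
  simp [rotVec, hi, hj]

end Rotation

theorem Lop_eq_fderiv_rotVec (i j : Fin (m + 1)) (f : (Fin (m + 1) → ℝ) → A)
    (x : Fin (m + 1) → ℝ) :
    Lop i j f x = fderiv ℝ f x (rotVec x i j) := by
  simp only [Lop, pd, rotVec, map_sub, map_smul]

theorem hasFDerivAt_nIm {x : Fin (m + 1) → ℝ} (hx : nIm x ≠ 0) :
    HasFDerivAt nIm ((nIm x)⁻¹ • ∑ k ∈ univ.erase 0, x k • ContinuousLinearMap.proj k :
      (Fin (m + 1) → ℝ) →L[ℝ] ℝ) x := by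
  have hsq : HasFDerivAt (fun y : Fin (m + 1) → ℝ => ∑ k ∈ univ.erase 0, y k ^ 2)
      (∑ k ∈ univ.erase 0, (2 * x k) • ContinuousLinearMap.proj k) x :=
    HasFDerivAt.fun_sum fun k _ => by simpa using (hasFDerivAt_apply (𝕜 := ℝ) k x).pow 2
  have hsq0 : ∑ k ∈ univ.erase 0, x k ^ 2 ≠ 0 := fun h => hx (by rw [nIm, h, Real.sqrt_zero])
  refine (hsq.sqrt hsq0).congr_fderiv ?_
  rw [smul_sum, smul_sum]
  refine sum_congr rfl fun k _ => ?_
  rw [← nIm, smul_smul, smul_smul]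
  congr 1
  field_simp

theorem fderiv_nIm_rotVec {x : Fin (m + 1) → ℝ} (hx : nIm x ≠ 0) {i j : Fin (m + 1)}
    (hi : i ≠ 0) (hj : j ≠ 0) : fderiv ℝ nIm x (rotVec x i j) = 0 := by
  rw [(hasFDerivAt_nIm hx).fderiv]
  have h := sum_smul_rotVec (mem_erase.2 ⟨hi, mem_univ i⟩) (mem_erase.2 ⟨hj, mem_univ j⟩) x x
  simp only [smul_eq_mul, mul_comm (rotVec x i j _), mul_comm (x j), sub_self] at h
  rw [smul_apply, _root_.sum_apply]
  simp only [smul_apply, ContinuousLinearMap.proj_apply, smul_eq_mul, h, mul_zero]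

theorem hasFDerivAt_zeta {x : Fin (m + 1) → ℝ} (hx : nIm x ≠ 0) :
    HasFDerivAt zeta (Complex.equivRealProdCLM.symm.toContinuousLinearMap ∘L
      ((ContinuousLinearMap.proj 0).prod (fderiv ℝ nIm x))) x :=
  Complex.equivRealProdCLM.symm.hasFDerivAt.comp x
    ((hasFDerivAt_apply 0 x).prodMk (hasFDerivAt_nIm hx).differentiableAt.hasFDerivAt)

theorem fderiv_zeta_rotVec {x : Fin (m + 1) → ℝ} (hx : nIm x ≠ 0) {i j : Fin (m + 1)}
    (hi : i ≠ 0) (hj : j ≠ 0) : fderiv ℝ zeta x (rotVec x i j) = 0 := by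
  rw [(hasFDerivAt_zeta hx).fderiv]
  simp [rotVec_apply_of_ne hi.symm hj.symm, fderiv_nIm_rotVec hx hi hj]

def imvL (v : Fin (m + 1) → A) : (Fin (m + 1) → ℝ) →L[ℝ] A :=
  ∑ k ∈ univ.erase 0, (ContinuousLinearMap.proj k).smulRight (v k)

theorem coe_imvL (v : Fin (m + 1) → A) : ⇑(imvL v) = imv v := by
  ext y
  simp [imvL, imv]

theorem fderiv_sfun_rotVec (v : Fin (m + 1) → A) {F₁ F₂ : ℂ → A} {x : Fin (m + 1) → ℝ}
    (hF₁ : DifferentiableAt ℝ F₁ (zeta x)) (hF₂ : DifferentiableAt ℝ F₂ (zeta x))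
    (hx : nIm x ≠ 0) {i j : Fin (m + 1)} (hi : i ≠ 0) (hj : j ≠ 0) :
    fderiv ℝ (sfun v F₁ F₂) x (rotVec x i j) = imv v (rotVec x i j) * sder F₂ x := by
  set G : ℂ → A := fun z => z.im⁻¹ • F₂ z
  have hG : DifferentiableAt ℝ G (zeta x) :=
    (Complex.imCLM.differentiableAt.inv hx).smul hF₂
  have hζ : DifferentiableAt ℝ zeta x := (hasFDerivAt_zeta hx).differentiableAt
  have hsfun : sfun v F₁ F₂ = F₁ ∘ zeta + ⇑(imvL v) * (G ∘ zeta) := by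
    ext y
    simp [sfun, coe_imvL, G, zeta]
  have hw := fderiv_zeta_rotVec hx hi hj
  rw [hsfun, fderiv_add (hF₁.comp x hζ) ((imvL v).differentiableAt.mul (hG.comp x hζ)),
    fderiv_mul' (imvL v).differentiableAt (hG.comp x hζ), fderiv_comp x hF₁ hζ,
    fderiv_comp x hG hζ, (imvL v).fderiv]
  simp [hw, coe_imvL, sder, G, zeta]

theorem Lop_sfun (v : Fin (m + 1) → A) {F₁ F₂ : ℂ → A} {x : Fin (m + 1) → ℝ}
    (hF₁ : DifferentiableAt ℝ F₁ (zeta x)) (hF₂ : DifferentiableAt ℝ F₂ (zeta x))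
    (hx : nIm x ≠ 0) {i j : Fin (m + 1)} (hi : i ≠ 0) (hj : j ≠ 0) :
    Lop i j (sfun v F₁ F₂) x = (x i • v j - x j • v i) * sder F₂ x := by
  rw [Lop_eq_fderiv_rotVec, fderiv_sfun_rotVec v hF₁ hF₂ hx hi hj, imv,
    sum_smul_rotVec (mem_erase.2 ⟨hi, mem_univ i⟩) (mem_erase.2 ⟨hj, mem_univ j⟩)]

theorem gamma_of_slice_function_general
    (v : Fin (m + 1) → A)
    (hsq : ∀ i : Fin (m + 1), i ≠ 0 → v i * v i = -1)
    (hanti : ∀ i j : Fin (m + 1), i ≠ 0 → j ≠ 0 → i ≠ j → v i * v j = -(v j * v i))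
    (D : Set ℂ) (hD : IsOpen D)
    (F₁ F₂ : ℂ → A)
    (hF1 : ContDiffOn ℝ 1 F₁ D) (hF2 : ContDiffOn ℝ 1 F₂ D) :
    ∀ x : Fin (m + 1) → ℝ, zeta x ∈ D → nIm x ≠ 0 →
      Gam v (sfun v F₁ F₂) x = ((m : ℝ) - 1) • (imv v x * sder F₂ x) := by
  intro x hz hx
  have hF₁ := (hF1.contDiffAt (hD.mem_nhds hz)).differentiableAt one_ne_zero
  have hF₂ := (hF2.contDiffAt (hD.mem_nhds hz)).differentiableAt one_ne_zero
  have hLop : ∀ i ∈ univ.erase 0, ∀ j ∈ univ.erase 0, v i * (v j * Lop i j (sfun v F₁ F₂) x) =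
      v i * (v j * ((x i • v j - x j • v i) * sder F₂ x)) :=
    fun i hi j hj => by rw [Lop_sfun v hF₁ hF₂ hx (ne_of_mem_erase hi) (ne_of_mem_erase hj)]
  have hcard : #(univ.erase (0 : Fin (m + 1))) = m := by simp
  simp only [Gam]
  rw [sum_congr rfl fun i hi => sum_congr rfl (hLop i hi),
    sum_sum_mul_mul_smul_sub_smul_of_anticomm (fun i hi => hsq i (ne_of_mem_erase hi))
      (fun i hi j hj => hanti i j (ne_of_mem_erase hi) (ne_of_mem_erase hj)), hcard, ← imv]
  module

/-- **Spherical Dirac operator on slice functions.**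
Let `f` be a `C¹` slice function, induced by the stem components `(F₁, F₂)`
(with the symmetry `F₁(z̄) = F₁(z)`, `F₂(z̄) = -F₂(z)`), on the axially
symmetric open subset `Ω = {x : ζ(x) ∈ D}` of a hypercomplex subspace `M` of
dimension `m+1 > 2` of an associative real *-algebra.  Then on `Ω \ ℝ` one has
`Γ_B f = (m-1) · Im(x) · f'ₛ(x)`. -/
theorem gamma_of_slice_function
    (hm : 2 ≤ m)
    (v : Fin (m + 1) → A) (hv0 : v 0 = 1)
    (hsq : ∀ i : Fin (m + 1), i ≠ 0 → v i * v i = -1)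
    (hanti : ∀ i j : Fin (m + 1), i ≠ 0 → j ≠ 0 → i ≠ j → v i * v j = -(v j * v i))
    (D : Set ℂ) (hD : IsOpen D) (hDsym : ∀ z ∈ D, (starRingEnd ℂ) z ∈ D)
    (F₁ F₂ : ℂ → A)
    (hs1 : ∀ z ∈ D, F₁ ((starRingEnd ℂ) z) = F₁ z)
    (hs2 : ∀ z ∈ D, F₂ ((starRingEnd ℂ) z) = -F₂ z)
    (hF1 : ContDiffOn ℝ 1 F₁ D) (hF2 : ContDiffOn ℝ 1 F₂ D) :
    ∀ x : Fin (m + 1) → ℝ, zeta x ∈ D → nIm x ≠ 0 →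
      Gam v (sfun v F₁ F₂) x = ((m : ℝ) - 1) • (imv v x * sder F₂ x) :=
  gamma_of_slice_function_general v hsq hanti D hD F₁ F₂ hF1 hF2

end PaperStmt
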